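/- The genus-2 surface group Σ = ⟨a1, a2, b1, b2 | [a1,a2][b1,b2]⟩ admits the alternative finite presentation ⟨x1, x2, c1, c2, δ | [x1,x2]δ, δ^{-2} x2 x1 [(x1 c1)^{-1}, (x2 c2)^{-1}] x2^{-1} x1^{-1}⟩, via the isomorphism given by x_i ↦ a_i^{-1}, c_i ↦ a_i b_i^{-1}, δ ↦ [a_2^{-1}, a_1^{-1}]. -/

import Mathlib

open FreeGroup
open scoped commutatorElement

def surfRels : Set (FreeGroup (Fin 4)) :=
  {⁅FreeGroup.of (0 : Fin 4), FreeGroup.of (1 : Fin 4)⁆ * ⁅FreeGroup.of (2 : Fin 4), FreeGroup.of (3 : Fin 4)⁆}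

/-- The genus-2 surface group. -/
abbrev Surf := PresentedGroup surfRels

def a (i : Fin 2) : Surf := PresentedGroup.of ⟨i.val, by omega⟩
def b (i : Fin 2) : Surf := PresentedGroup.of ⟨i.val + 2, by omega⟩

abbrev M := Multiplicative (ℤ × ℤ)

def φgen : Fin 4 → M :=
  fun n => Multiplicative.ofAdd (if n.val = 0 ∨ n.val = 2 then ((1 : ℤ), (0 : ℤ)) else ((0 : ℤ), (1 : ℤ)))

lemma φrels : ∀ r ∈ surfRels, FreeGroup.lift φgen r = 1 := by
  rintro r hr
  simp only [surfRels, Set.mem_singleton_iff] at hr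
  subst hr
  have h1 : (FreeGroup.lift φgen) (⁅FreeGroup.of (0 : Fin 4), FreeGroup.of (1 : Fin 4)⁆ * ⁅FreeGroup.of (2 : Fin 4), FreeGroup.of (3 : Fin 4)⁆) = ⁅φgen 0, φgen 1⁆ * ⁅φgen 2, φgen 3⁆ := by
    simp [commutatorElement_def]
  rw [h1, commutatorElement_eq_one_iff_mul_comm.mpr (mul_comm _ _),
    commutatorElement_eq_one_iff_mul_comm.mpr (mul_comm _ _), one_mul]

/-- The homomorphism Σ → ℤ² sending aᵢ, bᵢ to the i-th standard basis vector. -/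
def φ1 : Surf →* M := PresentedGroup.toGroup φrels

/-- The direct product of r genus-2 surface groups. -/
abbrev GG (r : ℕ) := ∀ _ : Fin r, Surf

def A (r : ℕ) (i : Fin 2) (k : Fin r) : GG r := Pi.mulSingle k (a i)
def B (r : ℕ) (i : Fin 2) (k : Fin r) : GG r := Pi.mulSingle k (b i)

/-- The homomorphism G = Σ₁ × ⋯ × Σr → ℤ² sending all aᵢ, bᵢ to eᵢ. -/
def Φ (r : ℕ) : GG r →* M := ∏ k : Fin r, φ1.comp (Pi.evalMonoidHom (fun _ => Surf) k)

def altRels : Set (FreeGroup (Fin 5)) :=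
  { ⁅FreeGroup.of (0 : Fin 5), FreeGroup.of (1 : Fin 5)⁆ * FreeGroup.of (4 : Fin 5),
    (FreeGroup.of (4 : Fin 5)) ^ (-2 : ℤ) * FreeGroup.of (1 : Fin 5) *
      FreeGroup.of (0 : Fin 5) *
      ⁅(FreeGroup.of (0 : Fin 5) * FreeGroup.of (2 : Fin 5))⁻¹,
       (FreeGroup.of (1 : Fin 5) * FreeGroup.of (3 : Fin 5))⁻¹⁆ *
      (FreeGroup.of (1 : Fin 5))⁻¹ * (FreeGroup.of (0 : Fin 5))⁻¹ }

/-!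
The first relator of the alternative presentation only eliminates `δ = [x₂, x₁]`. Since
`δ⁻² x₂x₁ = x₁x₂ [x₁⁻¹, x₂⁻¹]`, the second relator is the conjugate by `x₁x₂` of
`[x₁⁻¹, x₂⁻¹] [(x₁c₁)⁻¹, (x₂c₂)⁻¹]`, which is the surface relator in the letters
`aᵢ = xᵢ⁻¹`, `bᵢ = (xᵢcᵢ)⁻¹`. This substitution is inverse to `xᵢ = aᵢ⁻¹`, `cᵢ = aᵢbᵢ⁻¹`.
-/

section Relators

variable {G : Type*} [Group G]

theorem commutatorElement_mul_commutatorElement_swap (g h : G) : ⁅g, h⁆ * ⁅h, g⁆ = 1 := by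
  rw [← commutatorElement_inv g h, mul_inv_cancel]

theorem altRelator_eq_one_iff (x₀ x₁ c₀ c₁ : G) :
    ⁅x₁, x₀⁆ ^ (-2 : ℤ) * x₁ * x₀ * ⁅(x₀ * c₀)⁻¹, (x₁ * c₁)⁻¹⁆ * x₁⁻¹ * x₀⁻¹ = 1 ↔
      ⁅x₀⁻¹, x₁⁻¹⁆ * ⁅(x₀ * c₀)⁻¹, (x₁ * c₁)⁻¹⁆ = 1 := by
  have conj : ⁅x₁, x₀⁆ ^ (-2 : ℤ) * x₁ * x₀ * ⁅(x₀ * c₀)⁻¹, (x₁ * c₁)⁻¹⁆ * x₁⁻¹ * x₀⁻¹ =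
      (x₀ * x₁) * (⁅x₀⁻¹, x₁⁻¹⁆ * ⁅(x₀ * c₀)⁻¹, (x₁ * c₁)⁻¹⁆) * (x₀ * x₁)⁻¹ := by
    simp only [commutatorElement_def, zpow_neg, zpow_two]
    group
  rw [conj, conj_eq_one_iff]

theorem lift_eq_one_of_mem_surfRels {f : Fin 4 → G} (h : ⁅f 0, f 1⁆ * ⁅f 2, f 3⁆ = 1) :
    ∀ r ∈ surfRels, FreeGroup.lift f r = 1 := by
  rintro r rfl
  simpa only [_root_.map_mul, map_commutatorElement, lift_apply_of] using h

theorem lift_eq_one_of_mem_altRels {f : Fin 5 → G} (h₁ : ⁅f 0, f 1⁆ * f 4 = 1)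
    (h₂ : f 4 ^ (-2 : ℤ) * f 1 * f 0 * ⁅(f 0 * f 2)⁻¹, (f 1 * f 3)⁻¹⁆ * (f 1)⁻¹ * (f 0)⁻¹ = 1) :
    ∀ r ∈ altRels, FreeGroup.lift f r = 1 := by
  rintro r (rfl | rfl)
  · simpa only [_root_.map_mul, map_commutatorElement, lift_apply_of] using h₁
  · simpa only [_root_.map_mul, _root_.map_inv, map_zpow, map_commutatorElement, lift_apply_of]
      using h₂

end Relators

theorem surf_relator : ⁅a 0, a 1⁆ * ⁅b 0, b 1⁆ = 1 :=
  PresentedGroup.one_of_mem (rels := surfRels) rfl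

theorem alt_relator_one :
    ⁅(PresentedGroup.of 0 : PresentedGroup altRels), (PresentedGroup.of 1 : PresentedGroup altRels)⁆ *
      PresentedGroup.of 4 = 1 :=
  PresentedGroup.one_of_mem (Or.inl rfl)

theorem alt_relator_two :
    (PresentedGroup.of 4 : PresentedGroup altRels) ^ (-2 : ℤ) * PresentedGroup.of 1 *
      PresentedGroup.of 0 * ⁅(PresentedGroup.of 0 * PresentedGroup.of 2 : PresentedGroup altRels)⁻¹,
        (PresentedGroup.of 1 * PresentedGroup.of 3 : PresentedGroup altRels)⁻¹⁆ *
      (PresentedGroup.of 1)⁻¹ * (PresentedGroup.of 0)⁻¹ = 1 :=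
  PresentedGroup.one_of_mem (Or.inr rfl)

theorem alt_of_four_eq :
    (PresentedGroup.of 4 : PresentedGroup altRels) =
      ⁅(PresentedGroup.of 1 : PresentedGroup altRels), (PresentedGroup.of 0 : PresentedGroup altRels)⁆ := by
  rw [eq_inv_of_mul_eq_one_right alt_relator_one, commutatorElement_inv]

def altToSurf : PresentedGroup altRels →* Surf :=
  PresentedGroup.toGroup (f := ![(a 0)⁻¹, (a 1)⁻¹, a 0 * (b 0)⁻¹, a 1 * (b 1)⁻¹, ⁅(a 1)⁻¹, (a 0)⁻¹⁆])
    (lift_eq_one_of_mem_altRels (commutatorElement_mul_commutatorElement_swap _ _)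
      ((altRelator_eq_one_iff _ _ _ _).2 (by simpa using surf_relator)))

def surfToAlt : Surf →* PresentedGroup altRels :=
  PresentedGroup.toGroup (f := ![(PresentedGroup.of 0)⁻¹, (PresentedGroup.of 1)⁻¹,
      (PresentedGroup.of 0 * PresentedGroup.of 2)⁻¹, (PresentedGroup.of 1 * PresentedGroup.of 3)⁻¹])
    (lift_eq_one_of_mem_surfRels
      ((altRelator_eq_one_iff _ _ _ _).1 (alt_of_four_eq ▸ alt_relator_two)))

theorem surfToAlt_comp_altToSurf : surfToAlt.comp altToSurf = MonoidHom.id _ := by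
  refine PresentedGroup.ext fun i => ?_
  fin_cases i <;> simp [altToSurf, surfToAlt, a, b, PresentedGroup.toGroup.of, alt_of_four_eq]

theorem altToSurf_comp_surfToAlt : altToSurf.comp surfToAlt = MonoidHom.id _ := by
  refine PresentedGroup.ext fun i => ?_
  fin_cases i <;> simp [altToSurf, surfToAlt, a, b, PresentedGroup.toGroup.of]

/-- The genus-2 surface group admits the alternative presentation
`⟨x₁,x₂,c₁,c₂,δ ∣ [x₁,x₂]δ, δ⁻² x₂x₁ [(x₁c₁)⁻¹,(x₂c₂)⁻¹] x₂⁻¹x₁⁻¹⟩`, via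
`xᵢ ↦ aᵢ⁻¹`, `cᵢ ↦ aᵢbᵢ⁻¹`, `δ ↦ [a₂⁻¹,a₁⁻¹]`. -/
theorem stmt13 :
    ∃ e : PresentedGroup altRels ≃* Surf,
      e (PresentedGroup.of 0) = (a 0)⁻¹ ∧
      e (PresentedGroup.of 1) = (a 1)⁻¹ ∧
      e (PresentedGroup.of 2) = a 0 * (b 0)⁻¹ ∧
      e (PresentedGroup.of 3) = a 1 * (b 1)⁻¹ ∧
      e (PresentedGroup.of 4) = ⁅(a 1)⁻¹, (a 0)⁻¹⁆ :=
  ⟨altToSurf.toMulEquiv surfToAlt surfToAlt_comp_altToSurf altToSurf_comp_surfToAlt,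
    rfl, rfl, rfl, rfl, rfl⟩
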